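/- For every real p ≥ 7, the function f(p) = cot(π/p) / (√3 · cot((p−1)π/(2p))) satisfies f'(p) > 0, i.e., f is strictly increasing on [7, ∞), and f(7) > 4.05. -/

import Mathlib

open Real Set

/-! Put `t = π / (2p)`. Then `π / p = 2t` and `(p - 1)π / (2p) = π/2 - t`, so
`cot (π / p) / cot ((p - 1)π / (2p)) = cot 2t / tan t = cos 2t / (2 sin² t) = 1 / (2 sin² t) - 1`.
For `p > 1` the angle `t` lies in `(0, π/2)` and decreases as `p` grows, so `sin t` decreases and the
ratio increases. At `p = 7` the crude bound `sin (π/14) < π/14 < 0.225` already suffices. -/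

theorem cot_two_mul_div_cot_pi_div_two_sub {t : ℝ} (hs : sin t ≠ 0) (hc : cos t ≠ 0) :
    cot (2 * t) / cot (π / 2 - t) = (2 * sin t ^ 2)⁻¹ - 1 := by
  rw [cot_eq_cos_div_sin, cot_eq_cos_div_sin, cos_pi_div_two_sub, sin_pi_div_two_sub, sin_two_mul,
    cos_two_mul, cos_sq']
  field_simp
  ring

noncomputable def angleRatio (p : ℝ) : ℝ :=
  cot (π / p) / (√3 * cot ((p - 1) * π / (2 * p)))

lemma pi_div_two_mul_mem_Ioo {p : ℝ} (hp : 1 < p) : π / (2 * p) ∈ Ioo 0 (π / 2) := by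
  have := pi_pos
  refine ⟨by positivity, ?_⟩
  rw [div_lt_div_iff₀ (by positivity) two_pos]
  nlinarith

lemma angleRatio_eq {p : ℝ} (hp : 1 < p) :
    angleRatio p = ((2 * sin (π / (2 * p)) ^ 2)⁻¹ - 1) / √3 := by
  obtain ⟨ht0, htπ⟩ := pi_div_two_mul_mem_Ioo hp
  have hs : sin (π / (2 * p)) ≠ 0 := (sin_pos_of_pos_of_lt_pi ht0 (by linarith)).ne'
  have hc : cos (π / (2 * p)) ≠ 0 := (cos_pos_of_mem_Ioo ⟨by linarith, htπ⟩).ne'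
  have h2 : π / p = 2 * (π / (2 * p)) := by field_simp
  have hsub : (p - 1) * π / (2 * p) = π / 2 - π / (2 * p) := by field_simp
  rw [angleRatio, h2, hsub, ← cot_two_mul_div_cot_pi_div_two_sub hs hc, div_mul_eq_div_div_swap]

lemma hasDerivAt_angleRatio {p : ℝ} (hp : 1 < p) :
    HasDerivAt angleRatio
      (π * cos (π / (2 * p)) / (2 * √3 * p ^ 2 * sin (π / (2 * p)) ^ 3)) p := by
  obtain ⟨ht0, htπ⟩ := pi_div_two_mul_mem_Ioo hp
  have hs : sin (π / (2 * p)) ≠ 0 := (sin_pos_of_pos_of_lt_pi ht0 (by linarith)).ne'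
  have hclosed : (fun q => ((2 * sin (π / (2 * q)) ^ 2)⁻¹ - 1) / √3) =ᶠ[nhds p] angleRatio :=
    (eventually_gt_nhds hp).mono fun q hq => (angleRatio_eq hq).symm
  have hinner : HasDerivAt (fun q => π / (2 * q)) (-(π / (2 * p ^ 2))) p :=
    ((hasDerivAt_const p π).fun_div ((hasDerivAt_id' p).const_mul 2) (by positivity)).congr_deriv
      (by field_simp; ring)
  have := ((((hinner.sin.fun_pow 2).const_mul 2).fun_inv (by positivity)).sub_const 1).div_const √3
  refine (this.congr_of_eventuallyEq hclosed.symm).congr_deriv ?_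
  field_simp
  ring

lemma deriv_angleRatio_pos {p : ℝ} (hp : 1 < p) : 0 < deriv angleRatio p := by
  obtain ⟨ht0, htπ⟩ := pi_div_two_mul_mem_Ioo hp
  have hs := sin_pos_of_pos_of_lt_pi ht0 (by linarith)
  have hc := cos_pos_of_mem_Ioo ⟨by linarith, htπ⟩
  rw [(hasDerivAt_angleRatio hp).deriv]
  have := pi_pos
  positivity

lemma strictMonoOn_angleRatio : StrictMonoOn angleRatio (Ioi 1) :=
  strictMonoOn_of_deriv_pos (convex_Ioi 1)
    (fun _ hp => (hasDerivAt_angleRatio hp).continuousAt.continuousWithinAt)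
    (fun _ hp => deriv_angleRatio_pos (interior_subset hp))

lemma lt_angleRatio_seven : 4.05 < angleRatio 7 := by
  rw [angleRatio_eq (by norm_num)]
  have ht0 : 0 < π / (2 * 7) := by positivity
  have hs0 : 0 < sin (π / (2 * 7)) := sin_pos_of_pos_of_lt_pi ht0 (by linarith [pi_pos])
  have hs : sin (π / (2 * 7)) < 0.225 := (sin_lt ht0).trans (by linarith [pi_lt_d2])
  have hsqrt3 : √3 < 2 := by rw [sqrt_lt' two_pos]; norm_num
  have hinv : 9.8 < (2 * sin (π / (2 * 7)) ^ 2)⁻¹ := by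
    rw [lt_inv_comm₀ (by norm_num) (by positivity)]
    nlinarith
  rw [lt_div_iff₀ (by positivity)]
  linarith

/-- **Monotonicity of the Case 1 angle bound.**
For `f(p) = cot(π/p) / (√3 · cot((p−1)π/(2p)))`, the derivative is positive on
`[7, ∞)` (it equals `π(cot(π/p)csc²(π/(2p)) + 2cot(π/(2p))csc²(π/p))/(2p²)`),
hence `f` is strictly increasing on `[7, ∞)`, and `f(7) > 4.05`. -/
theorem case1_bound :
    (∀ p : ℝ, 7 ≤ p →
      0 < deriv (fun p : ℝ => Real.cot (π / p) / (Real.sqrt 3 * Real.cot ((p - 1) * π / (2 * p)))) p) ∧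
    StrictMonoOn (fun p : ℝ => Real.cot (π / p) / (Real.sqrt 3 * Real.cot ((p - 1) * π / (2 * p))))
      (Ici (7 : ℝ)) ∧
    (4.05 : ℝ) < Real.cot (π / 7) / (Real.sqrt 3 * Real.cot ((7 - 1) * π / (2 * 7))) :=
  ⟨fun _ hp => deriv_angleRatio_pos (by linarith),
    strictMonoOn_angleRatio.mono fun _ hp => lt_of_lt_of_le (by norm_num) (mem_Ici.mp hp),
    lt_angleRatio_seven⟩
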